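/- arXiv:1307.8404 — 4 statements merged into one kernel-verified Lean document; each statement's English description precedes it below -/
import Mathlib

section
/- Let L be a finite lattice, let a ≤ b in L, and let q = [c, d] be a prime interval of L (c ⋖ d) such that c and d are congruent modulo con(a, b). Then there exists a prime interval p = [e, f] contained in [a, b] (that is, a ≤ e ⋖ f ≤ b) such that [e, f] is congruence-projective onto [c, d]. -/
/-- A lattice congruence: an equivalence relation compatible with `⊔` and `⊓`. -/
def IsLatCon {α : Type*} [Lattice α] (r : α → α → Prop) : Prop :=
  Equivalence r ∧
    ∀ a b c d : α, r a b → r c d → r (a ⊔ c) (b ⊔ d) ∧ r (a ⊓ c) (b ⊓ d)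

/-- `latConGen a b` is the smallest lattice congruence relating `a` and `b`
(the intersection of all lattice congruences relating `a` and `b`). -/
def latConGen {α : Type*} [Lattice α] (a b : α) : α → α → Prop :=
  fun x y => ∀ r : α → α → Prop, IsLatCon r → r a b → r x y

/-- An interval `(a, b)` (representing `[a, b]`) is up congruence-perspective
to `(c, d)`. -/
def CPerspUp {α : Type*} [Lattice α] (I J : α × α) : Prop :=
  I.1 ≤ J.1 ∧ J.2 = I.2 ⊔ J.1

/-- An interval `(a, b)` is down congruence-perspective to `(c, d)`. -/
def CPerspDn {α : Type*} [Lattice α] (I J : α × α) : Prop :=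
  J.2 ≤ I.2 ∧ J.1 = I.1 ⊓ J.2

/-- Congruence-perspectivity. -/
def CPersp {α : Type*} [Lattice α] (I J : α × α) : Prop :=
  CPerspUp I J ∨ CPerspDn I J

/-- Congruence-projectivity: a finite chain of congruence-perspectivities. -/
def CProj {α : Type*} [Lattice α] : α × α → α × α → Prop :=
  Relation.ReflTransGen CPersp

/-!
Following Dilworth, `x ≡ y` modulo `con(a, b)` exactly when `x ⊓ y` and `x ⊔ y` are joined by an
ascending chain `x ⊓ y = z₀ ≤ z₁ ≤ ⋯ ≤ zₙ = x ⊔ y` with `[a, b] ⇒ [zᵢ, zᵢ₊₁]` for all `i`: this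
relation is a lattice congruence relating `a` and `b`, hence contains `con(a, b)`. For a prime
interval `[c, d]` such a chain must contain the link `[c, d]` itself, so `[a, b] ⇒ [c, d]`.
Finally, a prime interval inside the target of a perspectivity `[s, t] → [s', t']` is the image of
a prime interval inside `[s, t]`: in the up case take `x ∈ [s, t]` minimal with `q ≤ x ⊔ p` and a
lower cover `y` of `x` in `[s, t]`; the down case is its order dual. Pulling `[c, d]` back along
the chain of perspectivities from `[a, b]` gives the required `[e, f]`.
-/

section Congruence

variable {α : Type*} [Lattice α]

theorem CProj.sup_right {I : α × α} {u v : α} (h : CProj I (u, v)) (huv : u ≤ v) (z : α) :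
    CProj I (u ⊔ z, v ⊔ z) :=
  h.tail (Or.inl ⟨le_sup_left, by rw [← sup_assoc, sup_eq_left.2 huv]⟩)

theorem CProj.inf_right {I : α × α} {u v : α} (h : CProj I (u, v)) (huv : u ≤ v) (z : α) :
    CProj I (u ⊓ z, v ⊓ z) :=
  h.tail (Or.inr ⟨inf_le_left, by rw [← inf_assoc, inf_eq_left.2 huv]⟩)

def ProjChain (a b : α) : α → α → Prop :=
  Relation.ReflTransGen fun u v => u ≤ v ∧ CProj (a, b) (u, v)

def projCon (a b : α) (x y : α) : Prop :=
  ProjChain a b (x ⊓ y) (x ⊔ y)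

namespace ProjChain

variable {a b x y x' y' : α}

theorem sup_right (h : ProjChain a b x y) (z : α) : ProjChain a b (x ⊔ z) (y ⊔ z) :=
  h.lift (· ⊔ z) fun _ _ ⟨huv, hproj⟩ => ⟨sup_le_sup_right huv z, hproj.sup_right huv z⟩

theorem inf_right (h : ProjChain a b x y) (z : α) : ProjChain a b (x ⊓ z) (y ⊓ z) :=
  h.lift (· ⊓ z) fun _ _ ⟨huv, hproj⟩ => ⟨inf_le_inf_right z huv, hproj.inf_right huv z⟩

theorem sup_sup (h : ProjChain a b x y) (h' : ProjChain a b x' y') :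
    ProjChain a b (x ⊔ x') (y ⊔ y') := by
  have h'y := h'.sup_right y
  rw [sup_comm x' y, sup_comm y' y] at h'y
  exact (h.sup_right x').trans h'y

theorem inf_inf (h : ProjChain a b x y) (h' : ProjChain a b x' y') :
    ProjChain a b (x ⊓ x') (y ⊓ y') := by
  have h'y := h'.inf_right y
  rw [inf_comm x' y, inf_comm y' y] at h'y
  exact (h.inf_right x').trans h'y

theorem of_le_of_le {u v : α} (h : ProjChain a b x y) (hxu : x ≤ u) (huv : u ≤ v) (hvy : v ≤ y) :
    ProjChain a b u v := by
  have hu := h.sup_right u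
  rw [sup_eq_right.2 hxu, sup_eq_left.2 (huv.trans hvy)] at hu
  have huv' := hu.inf_right v
  rwa [inf_eq_left.2 huv, inf_eq_right.2 hvy] at huv'

theorem cproj_of_covBy {c d : α} (h : ProjChain a b c d) (hcd : c ⋖ d) : CProj (a, b) (c, d) := by
  suffices key : ∀ y, ProjChain a b c y → y ≤ d → y = c ∨ CProj (a, b) (c, d) from
    (key d h le_rfl).resolve_left hcd.lt.ne'
  intro y hy
  induction hy with
  | refl => exact fun _ => Or.inl rfl
  | tail _ hlink ih =>
    intro hyd
    rcases ih (hlink.1.trans hyd) with rfl | hproj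
    · exact (hcd.eq_or_eq hlink.1 hyd).imp id fun hd => by subst hd; exact hlink.2
    · exact Or.inr hproj

end ProjChain

theorem projCon_sup {a b x y x' y' : α} (h : projCon a b x y) (h' : projCon a b x' y') :
    projCon a b (x ⊔ x') (y ⊔ y') :=
  (h.sup_sup h').of_le_of_le
    (le_inf (sup_le_sup inf_le_left inf_le_left) (sup_le_sup inf_le_right inf_le_right))
    inf_le_sup
    (sup_le (sup_le_sup le_sup_left le_sup_left) (sup_le_sup le_sup_right le_sup_right))

theorem projCon_inf {a b x y x' y' : α} (h : projCon a b x y) (h' : projCon a b x' y') :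
    projCon a b (x ⊓ x') (y ⊓ y') :=
  (h.inf_inf h').of_le_of_le
    (le_inf (inf_le_inf inf_le_left inf_le_left) (inf_le_inf inf_le_right inf_le_right))
    inf_le_sup
    (sup_le (inf_le_inf le_sup_left le_sup_left) (inf_le_inf le_sup_right le_sup_right))

theorem projCon_trans {a b x y z : α} (hxy : projCon a b x y) (hyz : projCon a b y z) :
    projCon a b x z := by
  have below := hyz.inf_right (x ⊓ y)
  rw [inf_eq_right.2 (inf_le_right.trans le_sup_left : x ⊓ y ≤ y ⊔ z)] at below
  have above := hyz.sup_right (x ⊔ y)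
  rw [sup_eq_right.2 (inf_le_left.trans le_sup_right : y ⊓ z ≤ x ⊔ y)] at above
  exact ProjChain.of_le_of_le ((below.trans hxy).trans above)
    (le_inf (inf_le_right.trans inf_le_left) (inf_le_left.trans inf_le_right))
    inf_le_sup
    (sup_le (le_sup_left.trans le_sup_right) (le_sup_right.trans le_sup_left))

theorem isLatCon_projCon (a b : α) : IsLatCon (projCon a b) := by
  refine ⟨⟨fun x => ?_, fun {x y} h => ?_, projCon_trans⟩,
    fun x y x' y' h h' => ⟨projCon_sup h h', projCon_inf h h'⟩⟩
  · rw [projCon, inf_idem, sup_idem]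
    exact .refl
  · rwa [projCon, inf_comm, sup_comm]

theorem projCon_of_latConGen {a b x y : α} (hab : a ≤ b) (h : latConGen a b x y) :
    projCon a b x y := by
  refine h _ (isLatCon_projCon a b) ?_
  rw [projCon, inf_eq_left.2 hab, sup_eq_right.2 hab]
  exact .single ⟨hab, Relation.ReflTransGen.refl⟩

end Congruence

section Pullback

open OrderDual

variable {α : Type*} [Lattice α]

theorem CPersp.target_fst_le_snd {I J : α × α} (h : CPersp I J) : J.1 ≤ J.2 := by
  rcases h with ⟨-, hJ⟩ | ⟨-, hJ⟩
  · exact hJ ▸ le_sup_right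
  · exact hJ ▸ inf_le_right

theorem CPersp.of_dual {I J : αᵒᵈ × αᵒᵈ} (h : CPersp I J) :
    CPersp (ofDual I.2, ofDual I.1) (ofDual J.2, ofDual J.1) :=
  h.symm

theorem CProj.of_dual {I J : αᵒᵈ × αᵒᵈ} (h : CProj I J) :
    CProj (ofDual I.2, ofDual I.1) (ofDual J.2, ofDual J.1) :=
  Relation.ReflTransGen.lift (fun K : αᵒᵈ × αᵒᵈ => (ofDual K.2, ofDual K.1))
    (fun _ _ => CPersp.of_dual) I J h

variable [WellFoundedLT α] [WellFoundedGT α]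

theorem CPerspUp.exists_covBy_cproj {s t s' t' p q : α} (hst : s ≤ t)
    (h : CPerspUp (s, t) (s', t')) (hp : s' ≤ p) (hpq : p ⋖ q) (hq : q ≤ t') :
    ∃ e f, s ≤ e ∧ e ⋖ f ∧ f ≤ t ∧ CProj (e, f) (p, q) := by
  obtain ⟨hss', ht'⟩ := h
  dsimp only at hss' ht'
  subst ht'
  have hsp : s ≤ p := hss'.trans hp
  have hqt : q ≤ t ⊔ p := hq.trans (sup_le_sup_left hp t)
  obtain ⟨x, hxmin⟩ :=
    exists_minimal_of_wellFoundedLT (fun x => s ≤ x ∧ x ≤ t ∧ q ≤ x ⊔ p) ⟨t, hst, le_rfl, hqt⟩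
  obtain ⟨hsx, hxt, hqx⟩ := hxmin.prop
  have hs_lt_x : s < x := hsx.lt_of_ne fun hs =>
    hpq.lt.not_ge (by rwa [← hs, sup_eq_right.2 hsp] at hqx)
  obtain ⟨y, hsy, hyx⟩ := exists_le_covBy_of_lt hs_lt_x
  have hqy : ¬ q ≤ y ⊔ p := fun hqy =>
    hxmin.not_prop_of_lt hyx.lt ⟨hsy, hyx.le.trans hxt, hqy⟩
  have hmeet : (y ⊔ p) ⊓ q = p :=
    (hpq.eq_or_eq (le_inf le_sup_right hpq.le) inf_le_right).resolve_right
      fun h => hqy (h ▸ inf_le_left)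
  have up : CPersp (y, x) (y ⊔ p, x ⊔ p) :=
    Or.inl ⟨le_sup_left, by rw [← sup_assoc, sup_eq_left.2 hyx.le]⟩
  have down : CPersp (y ⊔ p, x ⊔ p) (p, q) := Or.inr ⟨hqx, hmeet.symm⟩
  exact ⟨y, x, hsy, hyx, hxt, (Relation.ReflTransGen.single up).tail down⟩

theorem CPersp.exists_covBy_cproj {I J : α × α} {p q : α} (h : CPersp I J) (hI : I.1 ≤ I.2)
    (hp : J.1 ≤ p) (hpq : p ⋖ q) (hq : q ≤ J.2) :
    ∃ e f, I.1 ≤ e ∧ e ⋖ f ∧ f ≤ I.2 ∧ CProj (e, f) (p, q) := by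
  rcases h with hup | hdown
  · exact CPerspUp.exists_covBy_cproj hI hup hp hpq hq
  · obtain ⟨f, e, hf, hfe, he, hproj⟩ :=
      CPerspUp.exists_covBy_cproj (α := αᵒᵈ) (s := toDual I.2) (t := toDual I.1)
        (s' := toDual J.2) (t' := toDual J.1) hI hdown hq hpq.toDual hp
    exact ⟨ofDual e, ofDual f, he, hfe.ofDual, hf, hproj.of_dual⟩

theorem CProj.exists_covBy_cproj {I : α × α} {p q : α} (h : CProj I (p, q)) (hI : I.1 ≤ I.2)
    (hpq : p ⋖ q) : ∃ e f, I.1 ≤ e ∧ e ⋖ f ∧ f ≤ I.2 ∧ CProj (e, f) (p, q) := by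
  induction h using Relation.ReflTransGen.head_induction_on with
  | refl => exact ⟨p, q, le_rfl, hpq, le_rfl, Relation.ReflTransGen.refl⟩
  | head hIJ _ ih =>
    obtain ⟨e', f', he', hef', hf', hproj'⟩ := ih hIJ.target_fst_le_snd
    obtain ⟨e, f, he, hef, hf, hproj⟩ := hIJ.exists_covBy_cproj hI he' hef' hf'
    exact ⟨e, f, he, hef, hf, hproj.trans hproj'⟩

end Pullback

/-- If `a ≤ b` and `[c, d]` is a prime interval collapsed by `con(a, b)`, then
there is a prime interval `[e, f]` inside `[a, b]` congruence-projective onto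
`[c, d]`. -/
theorem exists_prime_cproj {α : Type*} [Lattice α] [Fintype α]
    (a b c d : α) (hab : a ≤ b) (hcd : c ⋖ d)
    (h : latConGen a b c d) :
    ∃ e f : α, a ≤ e ∧ e ⋖ f ∧ f ≤ b ∧ CProj (e, f) (c, d) := by
  have hchain : ProjChain a b c d := by
    simpa only [projCon, inf_eq_left.2 hcd.le, sup_eq_right.2 hcd.le] using
      projCon_of_latConGen hab h
  exact (hchain.cproj_of_covBy hcd).exists_covBy_cproj hab hcd
end

section
/- Let L be a finite lattice and let a ⋖ b in L (so [a, b] is a prime interval). Then con(a, b) is a join-irreducible element of the lattice of all lattice congruences of L: con(a, b) is not the trivial (diagonal) congruence, and whenever con(a, b) equals the join θ₁ ⊔ θ₂ of two congruences θ₁, θ₂ of L, it equals θ₁ or θ₂. -/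
/-- The join of two lattice congruences in the lattice of congruences:
the smallest congruence containing both. -/
def latConJoin {α : Type*} [Lattice α] (θ₁ θ₂ : α → α → Prop) : α → α → Prop :=
  fun x y => ∀ r : α → α → Prop, IsLatCon r →
    (∀ u v : α, θ₁ u v → r u v) → (∀ u v : α, θ₂ u v → r u v) → r x y

open Relation

theorem Relation.TransGen.exists_rel_of_not_pred {α : Type*} {r : α → α → Prop}
    {p : α → Prop} {x y : α} (h : TransGen r x y) (hx : p x) (hy : ¬p y) :
    ∃ u v, r u v ∧ p u ∧ ¬p v := by
  induction h with
  | single h => exact ⟨x, _, h, hx, hy⟩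
  | @tail y z _ hyz ih =>
    by_cases hpy : p y
    · exact ⟨y, z, hyz, hpy, hy⟩
    · exact ih hpy

theorem CovBy.inf_sup_eq_or_eq {α : Type*} [Lattice α] {a b : α} (hab : a ⋖ b) (z : α) :
    z ⊓ b ⊔ a = a ∨ z ⊓ b ⊔ a = b :=
  hab.eq_or_eq le_sup_right (sup_le inf_le_right hab.le)

theorem CovBy.rel_of_transGen {α : Type*} [Lattice α] {a b : α} {r : α → α → Prop}
    (hab : a ⋖ b) (hr : ∀ x y, r x y → r (x ⊓ b ⊔ a) (y ⊓ b ⊔ a)) (h : TransGen r a b) :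
    r a b := by
  obtain ⟨u, v, huv, hu, hv⟩ := h.exists_rel_of_not_pred (p := fun z => z ⊓ b ⊔ a = a)
    (by simp [hab.le]) (by simpa [hab.le] using hab.ne')
  have hv : v ⊓ b ⊔ a = b := (hab.inf_sup_eq_or_eq v).resolve_left hv
  simpa only [hu, hv] using hr u v huv

namespace IsLatCon

variable {α : Type*} [Lattice α] {r θ₁ θ₂ : α → α → Prop}

theorem sup_right (hr : IsLatCon r) {x y : α} (u : α) (h : r x y) : r (x ⊔ u) (y ⊔ u) :=
  (hr.2 x y u u h (hr.1.refl u)).1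

theorem inf_right (hr : IsLatCon r) {x y : α} (u : α) (h : r x y) : r (x ⊓ u) (y ⊓ u) :=
  (hr.2 x y u u h (hr.1.refl u)).2

theorem inf_sup (hr : IsLatCon r) {x y : α} (a b : α) (h : r x y) :
    r (x ⊓ b ⊔ a) (y ⊓ b ⊔ a) :=
  hr.sup_right a (hr.inf_right b h)

theorem of_translations (hr : Equivalence r) (hsup : ∀ x y u, r x y → r (x ⊔ u) (y ⊔ u))
    (hinf : ∀ x y u, r x y → r (x ⊓ u) (y ⊓ u)) : IsLatCon r := by
  refine ⟨hr, fun x y u v hxy huv => ⟨?_, ?_⟩⟩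
  · have hyuv := hsup u v y huv
    rw [sup_comm u, sup_comm v] at hyuv
    exact hr.trans (hsup x y u hxy) hyuv
  · have hyuv := hinf u v y huv
    rw [inf_comm u, inf_comm v] at hyuv
    exact hr.trans (hinf x y u hxy) hyuv

theorem transGen_or (h₁ : IsLatCon θ₁) (h₂ : IsLatCon θ₂) :
    IsLatCon (TransGen fun x y => θ₁ x y ∨ θ₂ x y) :=
  of_translations
    ⟨fun x => .single (.inl (h₁.1.refl x)),
      fun h => transGen_swap.mp (TransGen.mono (fun _ _ => Or.imp h₁.1.symm h₂.1.symm) _ _ h),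
      .trans⟩
    (fun _ _ u h => h.lift (· ⊔ u) fun _ _ => Or.imp (h₁.sup_right u) (h₂.sup_right u))
    (fun _ _ u h => h.lift (· ⊓ u) fun _ _ => Or.imp (h₁.inf_right u) (h₂.inf_right u))

end IsLatCon

section

variable {α : Type*} [Lattice α]

theorem latConGen_self (a b : α) : latConGen a b a b :=
  fun _ _ hr => hr

theorem latConGen_eq_of_rel {a b : α} {θ : α → α → Prop} (hθ : IsLatCon θ) (hab : θ a b)
    (hle : ∀ x y, θ x y → latConGen a b x y) : latConGen a b = θ := by
  funext x y
  exact propext ⟨fun h => h θ hθ hab, hle x y⟩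

theorem latConJoin_of_left {θ₁ θ₂ : α → α → Prop} {x y : α} (h : θ₁ x y) :
    latConJoin θ₁ θ₂ x y :=
  fun _ _ h₁ _ => h₁ x y h

theorem latConJoin_of_right {θ₁ θ₂ : α → α → Prop} {x y : α} (h : θ₂ x y) :
    latConJoin θ₁ θ₂ x y :=
  fun _ _ _ h₂ => h₂ x y h

theorem transGen_or_of_latConJoin {θ₁ θ₂ : α → α → Prop} (h₁ : IsLatCon θ₁)
    (h₂ : IsLatCon θ₂) {x y : α} (h : latConJoin θ₁ θ₂ x y) :
    TransGen (fun x y => θ₁ x y ∨ θ₂ x y) x y :=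
  h _ (h₁.transGen_or h₂) (fun _ _ h => .single (.inl h)) (fun _ _ h => .single (.inr h))

end

theorem conGen_prime_supIrred_general {α : Type*} [Lattice α]
    (a b : α) (hab : a ⋖ b) :
    latConGen a b ≠ (· = ·) ∧
      ∀ θ₁ θ₂ : α → α → Prop, IsLatCon θ₁ → IsLatCon θ₂ →
        latConGen a b = latConJoin θ₁ θ₂ →
          latConGen a b = θ₁ ∨ latConGen a b = θ₂ := by
  have hgen : latConGen a b a b := latConGen_self a b
  refine ⟨fun h => hab.ne ((congr_fun₂ h a b).mp hgen), fun θ₁ θ₂ h₁ h₂ heq => ?_⟩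
  have hchain := transGen_or_of_latConJoin h₁ h₂ ((congr_fun₂ heq a b).mp hgen)
  have hrel : θ₁ a b ∨ θ₂ a b :=
    hab.rel_of_transGen (fun _ _ => Or.imp (h₁.inf_sup a b) (h₂.inf_sup a b)) hchain
  refine hrel.imp (fun hθ => ?_) (fun hθ => ?_)
  · exact latConGen_eq_of_rel h₁ hθ fun x y h => (congr_fun₂ heq x y).mpr (latConJoin_of_left h)
  · exact latConGen_eq_of_rel h₂ hθ fun x y h => (congr_fun₂ heq x y).mpr (latConJoin_of_right h)

/-- If `a ⋖ b` in a finite lattice, then `con(a, b)` is a join-irreducible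
element of the congruence lattice: it is not the diagonal congruence, and if it
is the join of two congruences then it equals one of them. -/
theorem conGen_prime_supIrred {α : Type*} [Lattice α] [Fintype α]
    (a b : α) (hab : a ⋖ b) :
    latConGen a b ≠ (· = ·) ∧
      ∀ θ₁ θ₂ : α → α → Prop, IsLatCon θ₁ → IsLatCon θ₂ →
        latConGen a b = latConJoin θ₁ θ₂ →
          latConGen a b = θ₁ ∨ latConGen a b = θ₂ :=
  conGen_prime_supIrred_general a b hab
end

section
/- Let K be a finite lattice, let L be a sublattice of K, and let α be a lattice congruence of L. Assume that for each α-class C there are elements u_C ≤ v_C of L with C = {x ∈ L : u_C ≤ x ≤ v_C}, and assume that the family of intervals of K given by {x ∈ K : u_C ≤ x ≤ v_C}, as C ranges over the α-classes, forms a partition of K (the sets cover K and are pairwise disjoint). Then the equivalence relation β on K whose classes are these intervals is a lattice congruence of K, and the restriction of β to L equals α; in particular, α extends to a congruence of K. -/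
open Set

section IntervalRelation

variable {K ι : Type*} [Lattice K]

def SameIcc (u v : ι → K) (x y : K) : Prop :=
  ∃ a, x ∈ Icc (u a) (v a) ∧ y ∈ Icc (u a) (v a)

theorem sup_mem_Icc_of_mem_Icc {x y p q r s m n : K} (hx : x ∈ Icc p q) (hy : y ∈ Icc r s)
    (hm : m ≤ p ⊔ r) (hn : q ⊔ s ≤ n) : x ⊔ y ∈ Icc m n :=
  ⟨hm.trans (sup_le_sup hx.1 hy.1), (sup_le_sup hx.2 hy.2).trans hn⟩

theorem inf_mem_Icc_of_mem_Icc {x y p q r s m n : K} (hx : x ∈ Icc p q) (hy : y ∈ Icc r s)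
    (hm : m ≤ p ⊓ r) (hn : q ⊓ s ≤ n) : x ⊓ y ∈ Icc m n :=
  ⟨hm.trans (inf_le_inf hx.1 hy.1), (inf_le_inf hx.2 hy.2).trans hn⟩

theorem isLatCon_sameIcc {u v : ι → K} (hcover : ∀ x, ∃ a, x ∈ Icc (u a) (v a))
    (hdisj : ∀ a b x, x ∈ Icc (u a) (v a) → x ∈ Icc (u b) (v b) → u a = u b ∧ v a = v b)
    (hsup : ∀ a b, ∃ c, u c ≤ u a ⊔ u b ∧ v a ⊔ v b ≤ v c)
    (hinf : ∀ a b, ∃ c, u c ≤ u a ⊓ u b ∧ v a ⊓ v b ≤ v c) :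
    IsLatCon (SameIcc u v) := by
  refine ⟨⟨fun x => ?_, fun ⟨a, hx, hy⟩ => ⟨a, hy, hx⟩, ?_⟩, ?_⟩
  · obtain ⟨a, ha⟩ := hcover x
    exact ⟨a, ha, ha⟩
  · rintro x y z ⟨a, hx, hya⟩ ⟨b, hyb, hz⟩
    obtain ⟨hu, hv⟩ := hdisj a b y hya hyb
    exact ⟨a, hx, hu ▸ hv ▸ hz⟩
  · rintro x y z w ⟨a, hxa, hya⟩ ⟨b, hzb, hwb⟩
    obtain ⟨c, hcu, hcv⟩ := hsup a b
    obtain ⟨d, hdu, hdv⟩ := hinf a b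
    exact ⟨⟨c, sup_mem_Icc_of_mem_Icc hxa hzb hcu hcv, sup_mem_Icc_of_mem_Icc hya hwb hcu hcv⟩,
      ⟨d, inf_mem_Icc_of_mem_Icc hxa hzb hdu hdv, inf_mem_Icc_of_mem_Icc hya hwb hdu hdv⟩⟩

end IntervalRelation

namespace IsLatCon

variable {M : Type*} [Lattice M] {ρ : M → M → Prop} {u v : M → M}

theorem mem_Icc_self (hρ : IsLatCon ρ) (hclass : ∀ a x, ρ a x ↔ x ∈ Icc (u a) (v a)) (a : M) :
    a ∈ Icc (u a) (v a) :=
  (hclass a a).1 (hρ.1.refl a)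

theorem rel_lower (hρ : IsLatCon ρ) (hclass : ∀ a x, ρ a x ↔ x ∈ Icc (u a) (v a)) (a : M) :
    ρ a (u a) :=
  have ha := hρ.mem_Icc_self hclass a
  (hclass a (u a)).2 ⟨le_rfl, ha.1.trans ha.2⟩

theorem rel_upper (hρ : IsLatCon ρ) (hclass : ∀ a x, ρ a x ↔ x ∈ Icc (u a) (v a)) (a : M) :
    ρ a (v a) :=
  have ha := hρ.mem_Icc_self hclass a
  (hclass a (v a)).2 ⟨ha.1.trans ha.2, le_rfl⟩

theorem endpoints_eq_of_rel (hρ : IsLatCon ρ) (hclass : ∀ a x, ρ a x ↔ x ∈ Icc (u a) (v a))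
    {a b : M} (hab : ρ a b) : u a = u b ∧ v a = v b := by
  have hba := hρ.1.symm hab
  have hub : u a ≤ u b := ((hclass a _).1 (hρ.1.trans hab (hρ.rel_lower hclass b))).1
  have hua : u b ≤ u a := ((hclass b _).1 (hρ.1.trans hba (hρ.rel_lower hclass a))).1
  have hvb : v b ≤ v a := ((hclass a _).1 (hρ.1.trans hab (hρ.rel_upper hclass b))).2
  have hva : v a ≤ v b := ((hclass b _).1 (hρ.1.trans hba (hρ.rel_upper hclass a))).2
  exact ⟨le_antisymm hub hua, le_antisymm hva hvb⟩

theorem u_sup_le_and_sup_v_le (hρ : IsLatCon ρ) (hclass : ∀ a x, ρ a x ↔ x ∈ Icc (u a) (v a))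
    (a b : M) : u (a ⊔ b) ≤ u a ⊔ u b ∧ v a ⊔ v b ≤ v (a ⊔ b) :=
  ⟨((hclass _ _).1 (hρ.2 _ _ _ _ (hρ.rel_lower hclass a) (hρ.rel_lower hclass b)).1).1,
    ((hclass _ _).1 (hρ.2 _ _ _ _ (hρ.rel_upper hclass a) (hρ.rel_upper hclass b)).1).2⟩

theorem u_inf_le_and_inf_v_le (hρ : IsLatCon ρ) (hclass : ∀ a x, ρ a x ↔ x ∈ Icc (u a) (v a))
    (a b : M) : u (a ⊓ b) ≤ u a ⊓ u b ∧ v a ⊓ v b ≤ v (a ⊓ b) :=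
  ⟨((hclass _ _).1 (hρ.2 _ _ _ _ (hρ.rel_lower hclass a) (hρ.rel_lower hclass b)).2).1,
    ((hclass _ _).1 (hρ.2 _ _ _ _ (hρ.rel_upper hclass a) (hρ.rel_upper hclass b)).2).2⟩

end IsLatCon

theorem sameIcc_coe_iff {K : Type*} [Lattice K] {L : Sublattice K} {ρ : L → L → Prop}
    (hρ : IsLatCon ρ) {u v : L → L} (hclass : ∀ a x, ρ a x ↔ x ∈ Icc (u a) (v a)) (x y : L) :
    SameIcc (fun a => (u a : K)) (fun a => (v a : K)) x y ↔ ρ x y := by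
  constructor
  · rintro ⟨a, hx, hy⟩
    exact hρ.1.trans (hρ.1.symm ((hclass a x).2 hx)) ((hclass a y).2 hy)
  · intro hxy
    exact ⟨x, hρ.mem_Icc_self hclass x, (hclass x y).1 hxy⟩

theorem congruence_extension_general {K : Type*} [Lattice K]
    (L : Sublattice K) (ρ : ↥L → ↥L → Prop) (hρ : IsLatCon ρ)
    (u v : ↥L → ↥L)
    (hclass : ∀ a x : ↥L, ρ a x ↔ u a ≤ x ∧ x ≤ v a)
    (hcover : ∀ x : K, ∃ a : ↥L, (u a : K) ≤ x ∧ x ≤ (v a : K))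
    (hdisj : ∀ a b : ↥L, ∀ x : K,
      ((u a : K) ≤ x ∧ x ≤ (v a : K)) → ((u b : K) ≤ x ∧ x ≤ (v b : K)) → ρ a b) :
    IsLatCon (fun x y : K => ∃ a : ↥L,
        ((u a : K) ≤ x ∧ x ≤ (v a : K)) ∧ ((u a : K) ≤ y ∧ y ≤ (v a : K))) ∧
      ∀ x y : ↥L,
        (∃ a : ↥L, ((u a : K) ≤ (x : K) ∧ (x : K) ≤ (v a : K)) ∧
            ((u a : K) ≤ (y : K) ∧ (y : K) ≤ (v a : K))) ↔ ρ x y := by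
  have hend {a b : L} (hab : ρ a b) : (u a : K) = u b ∧ (v a : K) = v b := by
    obtain ⟨hu, hv⟩ := hρ.endpoints_eq_of_rel hclass hab
    exact ⟨congrArg _ hu, congrArg _ hv⟩
  refine ⟨isLatCon_sameIcc hcover (fun a b x ha hb => hend (hdisj a b x ha hb))
    (fun a b => ⟨a ⊔ b, hρ.u_sup_le_and_sup_v_le hclass a b⟩)
    (fun a b => ⟨a ⊓ b, hρ.u_inf_le_and_inf_v_le hclass a b⟩), sameIcc_coe_iff hρ hclass⟩

/-- Let `K` be a finite lattice, `L` a sublattice, and `ρ` a congruence of `L`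
whose class of `a` is the interval `[u a, v a]` of `L`. If the intervals
`[u a, v a]` of `K` (as `a` ranges over `L`) cover `K` and overlap only when
the corresponding classes coincide (i.e., they form a partition of `K`), then
the equivalence relation `β` on `K` whose classes are these intervals is a
lattice congruence of `K` whose restriction to `L` equals `ρ`. -/
theorem congruence_extension {K : Type*} [Lattice K] [Fintype K]
    (L : Sublattice K) (ρ : ↥L → ↥L → Prop) (hρ : IsLatCon ρ)
    (u v : ↥L → ↥L)
    (huv : ∀ a : ↥L, u a ≤ v a)
    (hclass : ∀ a x : ↥L, ρ a x ↔ u a ≤ x ∧ x ≤ v a)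
    (hcover : ∀ x : K, ∃ a : ↥L, (u a : K) ≤ x ∧ x ≤ (v a : K))
    (hdisj : ∀ a b : ↥L, ∀ x : K,
      ((u a : K) ≤ x ∧ x ≤ (v a : K)) → ((u b : K) ≤ x ∧ x ≤ (v b : K)) → ρ a b) :
    IsLatCon (fun x y : K => ∃ a : ↥L,
        ((u a : K) ≤ x ∧ x ≤ (v a : K)) ∧ ((u a : K) ≤ y ∧ y ≤ (v a : K))) ∧
      ∀ x y : ↥L,
        (∃ a : ↥L, ((u a : K) ≤ (x : K) ∧ (x : K) ≤ (v a : K)) ∧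
            ((u a : K) ≤ (y : K) ∧ (y : K) ≤ (v a : K))) ↔ ρ x y :=
  congruence_extension_general L ρ hρ u v hclass hcover hdisj
end

section
/- Let L be a finite semimodular lattice that is slim, i.e., the set of join-irreducible elements of L is the union of two chains. Suppose an element a of L covers three pairwise distinct elements x₁, x₂, x₃. Then there is a labeling y₁, y₂, y₃ of the elements x₁, x₂, x₃ (i.e., {y₁, y₂, y₃} = {x₁, x₂, x₃}) such that the seven elements a, y₁, y₂, y₃, y₁ ⊓ y₂, y₂ ⊓ y₃, y₁ ⊓ y₃ are pairwise distinct and satisfy: y₁ ⊔ y₂ = y₁ ⊔ y₃ = y₂ ⊔ y₃ = a, (y₁ ⊓ y₂) ⊔ (y₂ ⊓ y₃) = y₂, (y₁ ⊓ y₂) ⊔ y₃ = a, y₁ ⊔ (y₂ ⊓ y₃) = a, and y₁ ⊓ y₃ = (y₁ ⊓ y₂) ⊓ (y₂ ⊓ y₃). Consequently, the set {a, y₁, y₂, y₃, y₁ ⊓ y₂, y₂ ⊓ y₃, y₁ ⊓ y₃} is closed under ⊔ and ⊓, so the sublattice of L generated by {x₁, x₂, x₃} is this seven-element sublattice, which is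 isomorphic to the lattice S₇. -/
/-!
Each join-irreducible element lies on one of two chains `C₁`, `C₂`, and in a finite lattice
`u ≤ w` as soon as every join-irreducible below `u` is below `w`. Comparing elements only through
the join-irreducibles of a single chain `Cᵢ` gives a total preorder `≤ᵢ` (`JoinIrreducibleLE Cᵢ`),
and `u ≤ w` iff both `u ≤₁ w` and `u ≤₂ w`; so two incomparable elements are ordered oppositely
by `≤₁` and `≤₂`. Relabel the three covers of `a` so that `y₃ ≤₁ y₂ ≤₁ y₁`, hence
`y₁ ≤₂ y₂ ≤₂ y₃`. Testing with both chains gives `y₁ ⊓ y₃ ≤ y₂` and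
`y₂ ≤ (y₁ ⊓ y₂) ⊔ (y₂ ⊓ y₃)`, and these two facts alone force the seven elements into a copy
of `S₇`.
-/

/-- `j` is join-irreducible: it is not the least element, and whenever
`j = x ⊔ y` we have `j = x` or `j = y`. -/
def JoinIrreducible {α : Type*} [Lattice α] (j : α) : Prop :=
  (¬ ∀ x : α, j ≤ x) ∧ ∀ x y : α, j = x ⊔ y → j = x ∨ j = y

section S7

variable {α : Type*} [Lattice α] {a y₁ y₂ y₃ : α}

theorem CovBy.not_le_of_ne {u w : α} (hu : u ⋖ a) (hw : w ⋖ a) (hne : u ≠ w) : ¬ u ≤ w :=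
  fun hle => hu.2 (hle.lt_of_ne hne) hw.lt

theorem inf_sup_eq_of_covBy (h₂ : y₂ ≤ a) (h₃ : y₃ ⋖ a) (h₂₃ : ¬ y₂ ≤ y₃)
    (hB : (y₁ ⊓ y₂) ⊔ (y₂ ⊓ y₃) = y₂) : (y₁ ⊓ y₂) ⊔ y₃ = a := by
  refine (h₃.eq_or_eq le_sup_right (sup_le (inf_le_right.trans h₂) h₃.le)).resolve_left
    fun h => h₂₃ ?_
  calc y₂ = (y₁ ⊓ y₂) ⊔ (y₂ ⊓ y₃) := hB.symm
    _ ≤ y₃ := sup_le (sup_eq_right.mp h) inf_le_right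

theorem sup_inf_eq_of_covBy (h₁ : y₁ ⋖ a) (h₂ : y₂ ≤ a) (h₂₁ : ¬ y₂ ≤ y₁)
    (hB : (y₁ ⊓ y₂) ⊔ (y₂ ⊓ y₃) = y₂) : y₁ ⊔ (y₂ ⊓ y₃) = a := by
  have h := inf_sup_eq_of_covBy (y₁ := y₃) h₂ h₁ h₂₁ (by simpa only [inf_comm, sup_comm] using hB)
  rwa [sup_comm, inf_comm]

theorem inf_eq_inf_inf_inf_of_inf_le (hF : y₁ ⊓ y₃ ≤ y₂) :
    y₁ ⊓ y₃ = (y₁ ⊓ y₂) ⊓ (y₂ ⊓ y₃) := by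
  rw [inf_assoc, inf_left_idem, inf_left_comm, inf_eq_right.mpr hF]

theorem pairwise_ne_of_covBy (h₁ : y₁ ⋖ a) (h₂ : y₂ ⋖ a) (h₃ : y₃ ⋖ a)
    (h₁₂ : y₁ ≠ y₂) (h₁₃ : y₁ ≠ y₃) (h₂₃ : y₂ ≠ y₃)
    (hF : y₁ ⊓ y₃ ≤ y₂) (hB : (y₁ ⊓ y₂) ⊔ (y₂ ⊓ y₃) = y₂) :
    [a, y₁, y₂, y₃, y₁ ⊓ y₂, y₂ ⊓ y₃, y₁ ⊓ y₃].Pairwise (· ≠ ·) := by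
  have hC := inf_sup_eq_of_covBy h₂.le h₃ (h₂.not_le_of_ne h₃ h₂₃) hB
  have hD := sup_inf_eq_of_covBy (y₃ := y₃) h₁ h₂.le (h₂.not_le_of_ne h₁ h₁₂.symm) hB
  have := h₁.not_le_of_ne h₂ h₁₂
  have := h₂.not_le_of_ne h₁ h₁₂.symm
  have := h₁.not_le_of_ne h₃ h₁₃
  have := h₃.not_le_of_ne h₁ h₁₃.symm
  have := h₂.not_le_of_ne h₃ h₂₃
  have := h₃.not_le_of_ne h₂ h₂₃.symm
  have := h₁.lt.not_ge
  have := h₂.lt.not_ge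
  have := h₃.lt.not_ge
  have : ¬ y₁ ⊓ y₂ ≤ y₃ := fun h => h₃.ne (sup_eq_right.mpr h ▸ hC)
  have : ¬ y₂ ⊓ y₃ ≤ y₁ := fun h => h₁.ne (sup_eq_left.mpr h ▸ hD)
  simp only [List.pairwise_cons, List.forall_mem_cons, List.not_mem_nil, IsEmpty.forall_iff,
    implies_true, List.Pairwise.nil, and_true]
  repeat' apply And.intro
  -- the seven elements are already told apart by which of `y₁`, `y₂`, `y₃` they lie below
  all_goals first
    | (apply ne_of_apply_ne (· ≤ y₁); simp [*]; done)
    | (apply ne_of_apply_ne (· ≤ y₂); simp [*]; done)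
    | (apply ne_of_apply_ne (· ≤ y₃); simp [*])

theorem supClosed_of_covBy (h₁ : y₁ ⋖ a) (h₂ : y₂ ⋖ a) (h₃ : y₃ ⋖ a)
    (h₁₂ : y₁ ≠ y₂) (h₁₃ : y₁ ≠ y₃) (h₂₃ : y₂ ≠ y₃)
    (hF : y₁ ⊓ y₃ ≤ y₂) (hB : (y₁ ⊓ y₂) ⊔ (y₂ ⊓ y₃) = y₂) :
    SupClosed ({a, y₁, y₂, y₃, y₁ ⊓ y₂, y₂ ⊓ y₃, y₁ ⊓ y₃} : Set α) := by
  have hC := inf_sup_eq_of_covBy h₂.le h₃ (h₂.not_le_of_ne h₃ h₂₃) hB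
  have hD := sup_inf_eq_of_covBy (y₃ := y₃) h₁ h₂.le (h₂.not_le_of_ne h₁ h₁₂.symm) hB
  have j₁₂ := h₁.wcovBy.sup_eq h₂.wcovBy h₁₂
  have j₁₃ := h₁.wcovBy.sup_eq h₃.wcovBy h₁₃
  have j₂₃ := h₂.wcovBy.sup_eq h₃.wcovBy h₂₃
  simp only [SupClosed, Set.mem_insert_iff, Set.mem_singleton_iff, forall_eq_or_imp, forall_eq,
    sup_idem, j₁₂, j₁₃, j₂₃, hB, hC, hD, sup_comm y₂ y₁, sup_comm y₃ y₁, sup_comm y₃ y₂,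
    sup_comm (y₂ ⊓ y₃) (y₁ ⊓ y₂), sup_comm y₃ (y₁ ⊓ y₂), sup_comm (y₂ ⊓ y₃) y₁,
    sup_of_le_left, sup_of_le_right, h₁.le, h₂.le, h₃.le, inf_le_of_left_le h₁.le,
    inf_le_of_left_le h₂.le, inf_le_left, inf_le_right, le_inf_iff, hF, and_self, true_or, or_true]

theorem infClosed_of_inf_le (h₁ : y₁ ≤ a) (h₂ : y₂ ≤ a) (h₃ : y₃ ≤ a) (hF : y₁ ⊓ y₃ ≤ y₂) :
    InfClosed ({a, y₁, y₂, y₃, y₁ ⊓ y₂, y₂ ⊓ y₃, y₁ ⊓ y₃} : Set α) := by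
  have hE := (inf_eq_inf_inf_inf_of_inf_le hF).symm
  have hG : y₁ ⊓ (y₂ ⊓ y₃) = y₁ ⊓ y₃ := by rw [inf_left_comm, inf_eq_right.mpr hF]
  have hH : (y₁ ⊓ y₂) ⊓ y₃ = y₁ ⊓ y₃ := by rw [inf_right_comm, inf_eq_left.mpr hF]
  simp only [InfClosed, Set.mem_insert_iff, Set.mem_singleton_iff, forall_eq_or_imp, forall_eq,
    inf_idem, hE, hG, hH, inf_comm y₂ y₁, inf_comm y₃ y₁, inf_comm y₃ y₂,
    inf_comm (y₂ ⊓ y₃) (y₁ ⊓ y₂), inf_comm y₃ (y₁ ⊓ y₂), inf_comm (y₂ ⊓ y₃) y₁,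
    inf_of_le_left, inf_of_le_right, h₁, h₂, h₃, inf_le_of_left_le h₁,
    inf_le_of_left_le h₂, inf_le_left, inf_le_right, le_inf_iff, hF, and_self, true_or, or_true]

end S7

theorem exists_relabel_of_total {β : Type*} {r : β → β → Prop} (htot : ∀ u w, r u w ∨ r w u)
    {x₁ x₂ x₃ : β} (h₁₂ : x₁ ≠ x₂) (h₁₃ : x₁ ≠ x₃) (h₂₃ : x₂ ≠ x₃) :
    ∃ y₁ y₂ y₃, ({y₁, y₂, y₃} : Set β) = {x₁, x₂, x₃} ∧ y₁ ≠ y₂ ∧ y₁ ≠ y₃ ∧ y₂ ≠ y₃ ∧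
      r y₂ y₁ ∧ r y₃ y₂ := by
  have perm : ∀ z₁ z₂ z₃ : β, (∀ z, z = z₁ ∨ z = z₂ ∨ z = z₃ ↔ z = x₁ ∨ z = x₂ ∨ z = x₃) →
      ({z₁, z₂, z₃} : Set β) = {x₁, x₂, x₃} := fun _ _ _ h => Set.ext h
  rcases htot x₁ x₂ with r₁₂ | r₂₁ <;> rcases htot x₂ x₃ with r₂₃ | r₃₂
  · exact ⟨x₃, x₂, x₁, perm _ _ _ (by tauto), h₂₃.symm, h₁₃.symm, h₁₂.symm, r₂₃, r₁₂⟩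
  · rcases htot x₁ x₃ with r₁₃ | r₃₁
    · exact ⟨x₂, x₃, x₁, perm _ _ _ (by tauto), h₂₃, h₁₂.symm, h₁₃.symm, r₃₂, r₁₃⟩
    · exact ⟨x₂, x₁, x₃, perm _ _ _ (by tauto), h₁₂.symm, h₂₃, h₁₃, r₁₂, r₃₁⟩
  · rcases htot x₁ x₃ with r₁₃ | r₃₁
    · exact ⟨x₃, x₁, x₂, perm _ _ _ (by tauto), h₁₃.symm, h₂₃.symm, h₁₂, r₁₃, r₂₁⟩
    · exact ⟨x₁, x₃, x₂, perm _ _ _ (by tauto), h₁₃, h₁₂, h₂₃.symm, r₃₁, r₂₃⟩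
  · exact ⟨x₁, x₂, x₃, rfl, h₁₂, h₁₃, h₂₃, r₂₁, r₃₂⟩

section Slim

variable {α : Type*} [Lattice α]

theorem le_of_forall_joinIrreducible_le [WellFoundedLT α] {z w : α}
    (h : ∀ j, JoinIrreducible j → j ≤ z → j ≤ w) : z ≤ w := by
  induction z using WellFoundedLT.induction with
  | ind z ih =>
    by_cases hmin : ∀ x, z ≤ x
    · exact hmin w
    by_cases hz : JoinIrreducible z
    · exact h z hz le_rfl
    obtain ⟨u, v, rfl, hu, hv⟩ : ∃ u v, z = u ⊔ v ∧ z ≠ u ∧ z ≠ v := by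
      simpa [JoinIrreducible, hmin] using hz
    have hu' : u < u ⊔ v := lt_of_le_of_ne le_sup_left hu.symm
    have hv' : v < u ⊔ v := lt_of_le_of_ne le_sup_right hv.symm
    exact sup_le (ih u hu' fun j hj hle => h j hj (hle.trans hu'.le))
      (ih v hv' fun j hj hle => h j hj (hle.trans hv'.le))

def JoinIrreducibleLE (C : Set α) (u w : α) : Prop :=
  ∀ j ∈ C, JoinIrreducible j → j ≤ u → j ≤ w

theorem IsChain.joinIrreducibleLE_total {C : Set α} (hC : IsChain (· ≤ ·) C) (u w : α) :
    JoinIrreducibleLE C u w ∨ JoinIrreducibleLE C w u := by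
  by_contra! ⟨huw, hwu⟩
  simp only [JoinIrreducibleLE, not_forall] at huw hwu
  obtain ⟨j, hjC, hj, hju, hjw⟩ := huw
  obtain ⟨k, hkC, hk, hkw, hku⟩ := hwu
  rcases hC.total hjC hkC with hjk | hkj
  · exact hjw (hjk.trans hkw)
  · exact hku (hkj.trans hju)

variable {C₁ C₂ : Set α}

theorem le_of_joinIrreducibleLE [WellFoundedLT α] (hcov : ∀ j, JoinIrreducible j → j ∈ C₁ ∪ C₂)
    {u w : α} (h₁ : JoinIrreducibleLE C₁ u w) (h₂ : JoinIrreducibleLE C₂ u w) : u ≤ w :=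
  le_of_forall_joinIrreducible_le fun j hj hle =>
    (hcov j hj).elim (fun hC => h₁ j hC hj hle) (fun hC => h₂ j hC hj hle)

theorem JoinIrreducibleLE.swap [WellFoundedLT α] (hcov : ∀ j, JoinIrreducible j → j ∈ C₁ ∪ C₂)
    (hC₂ : IsChain (· ≤ ·) C₂) {u w : α} (h : JoinIrreducibleLE C₁ u w) (hn : ¬ u ≤ w) :
    JoinIrreducibleLE C₂ w u :=
  (hC₂.joinIrreducibleLE_total u w).resolve_left fun h₂ => hn (le_of_joinIrreducibleLE hcov h h₂)

variable [WellFoundedLT α] {y₁ y₂ y₃ : α}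

theorem inf_le_of_joinIrreducibleLE (hcov : ∀ j, JoinIrreducible j → j ∈ C₁ ∪ C₂)
    (hC₂ : IsChain (· ≤ ·) C₂) (h₂₁ : JoinIrreducibleLE C₁ y₂ y₁)
    (h₃₂ : JoinIrreducibleLE C₁ y₃ y₂) (n₂₁ : ¬ y₂ ≤ y₁) : y₁ ⊓ y₃ ≤ y₂ :=
  le_of_joinIrreducibleLE hcov (fun j hC hj hle => h₃₂ j hC hj (hle.trans inf_le_right))
    (fun j hC hj hle => h₂₁.swap hcov hC₂ n₂₁ j hC hj (hle.trans inf_le_left))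

theorem inf_sup_inf_eq_of_joinIrreducibleLE (hcov : ∀ j, JoinIrreducible j → j ∈ C₁ ∪ C₂)
    (hC₂ : IsChain (· ≤ ·) C₂) (h₂₁ : JoinIrreducibleLE C₁ y₂ y₁)
    (h₃₂ : JoinIrreducibleLE C₁ y₃ y₂) (n₃₂ : ¬ y₃ ≤ y₂) : (y₁ ⊓ y₂) ⊔ (y₂ ⊓ y₃) = y₂ := by
  refine le_antisymm (sup_le inf_le_right inf_le_left) (le_of_joinIrreducibleLE hcov ?_ ?_)
  · exact fun j hC hj hle => le_sup_of_le_left (le_inf (h₂₁ j hC hj hle) hle)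
  · exact fun j hC hj hle => le_sup_of_le_right (le_inf hle (h₃₂.swap hcov hC₂ n₃₂ j hC hj hle))

end Slim

theorem slim_semimodular_three_covers_S7_general {α : Type*} [Lattice α] [Fintype α]
    (hslim : ∃ C₁ C₂ : Set α, IsChain (· ≤ ·) C₁ ∧ IsChain (· ≤ ·) C₂ ∧
      ∀ j : α, JoinIrreducible j → j ∈ C₁ ∪ C₂)
    (a x₁ x₂ x₃ : α) (h1 : x₁ ⋖ a) (h2 : x₂ ⋖ a) (h3 : x₃ ⋖ a)
    (h12 : x₁ ≠ x₂) (h13 : x₁ ≠ x₃) (h23 : x₂ ≠ x₃) :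
    ∃ y₁ y₂ y₃ : α, ({y₁, y₂, y₃} : Set α) = ({x₁, x₂, x₃} : Set α) ∧
      [a, y₁, y₂, y₃, y₁ ⊓ y₂, y₂ ⊓ y₃, y₁ ⊓ y₃].Pairwise (· ≠ ·) ∧
      y₁ ⊔ y₂ = a ∧ y₁ ⊔ y₃ = a ∧ y₂ ⊔ y₃ = a ∧
      (y₁ ⊓ y₂) ⊔ (y₂ ⊓ y₃) = y₂ ∧
      (y₁ ⊓ y₂) ⊔ y₃ = a ∧
      y₁ ⊔ (y₂ ⊓ y₃) = a ∧
      y₁ ⊓ y₃ = (y₁ ⊓ y₂) ⊓ (y₂ ⊓ y₃) ∧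
      (∀ u ∈ ({a, y₁, y₂, y₃, y₁ ⊓ y₂, y₂ ⊓ y₃, y₁ ⊓ y₃} : Set α),
        ∀ w ∈ ({a, y₁, y₂, y₃, y₁ ⊓ y₂, y₂ ⊓ y₃, y₁ ⊓ y₃} : Set α),
          u ⊔ w ∈ ({a, y₁, y₂, y₃, y₁ ⊓ y₂, y₂ ⊓ y₃, y₁ ⊓ y₃} : Set α) ∧
          u ⊓ w ∈ ({a, y₁, y₂, y₃, y₁ ⊓ y₂, y₂ ⊓ y₃, y₁ ⊓ y₃} : Set α)) := by
  obtain ⟨C₁, C₂, hC₁, hC₂, hcov⟩ := hslim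
  obtain ⟨y₁, y₂, y₃, hy, h₁₂, h₁₃, h₂₃, h₂₁, h₃₂⟩ :=
    exists_relabel_of_total hC₁.joinIrreducibleLE_total h12 h13 h23
  have hcovBy : ∀ y ∈ ({y₁, y₂, y₃} : Set α), y ⋖ a := by
    rw [hy]
    rintro y (rfl | rfl | rfl) <;> assumption
  have hy₁ := hcovBy y₁ (by simp)
  have hy₂ := hcovBy y₂ (by simp)
  have hy₃ := hcovBy y₃ (by simp)
  have hF := inf_le_of_joinIrreducibleLE hcov hC₂ h₂₁ h₃₂ (hy₂.not_le_of_ne hy₁ h₁₂.symm)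
  have hB := inf_sup_inf_eq_of_joinIrreducibleLE hcov hC₂ h₂₁ h₃₂ (hy₃.not_le_of_ne hy₂ h₂₃.symm)
  exact ⟨y₁, y₂, y₃, hy, pairwise_ne_of_covBy hy₁ hy₂ hy₃ h₁₂ h₁₃ h₂₃ hF hB,
    hy₁.wcovBy.sup_eq hy₂.wcovBy h₁₂, hy₁.wcovBy.sup_eq hy₃.wcovBy h₁₃,
    hy₂.wcovBy.sup_eq hy₃.wcovBy h₂₃, hB,
    inf_sup_eq_of_covBy hy₂.le hy₃ (hy₂.not_le_of_ne hy₃ h₂₃) hB,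
    sup_inf_eq_of_covBy hy₁ hy₂.le (hy₂.not_le_of_ne hy₁ h₁₂.symm) hB,
    inf_eq_inf_inf_inf_of_inf_le hF,
    fun u hu w hw => ⟨supClosed_of_covBy hy₁ hy₂ hy₃ h₁₂ h₁₃ h₂₃ hF hB hu hw,
      infClosed_of_inf_le hy₁.le hy₂.le hy₃.le hF hu hw⟩⟩

/-- In a finite, slim, semimodular lattice, if an element `a` covers three
pairwise distinct elements `x₁, x₂, x₃`, then `{x₁, x₂, x₃}` can be relabeled
as `y₁, y₂, y₃` so that the seven elements
`a, y₁, y₂, y₃, y₁ ⊓ y₂, y₂ ⊓ y₃, y₁ ⊓ y₃` are pairwise distinct, satisfy the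
`S₇` relations, and form a set closed under `⊔` and `⊓`; hence the sublattice
generated by `{x₁, x₂, x₃}` is a copy of `S₇`. -/
theorem slim_semimodular_three_covers_S7 {α : Type*} [Lattice α] [Fintype α]
    (hsm : ∀ a b : α, a ⊓ b ⋖ a → b ⋖ a ⊔ b)
    (hslim : ∃ C₁ C₂ : Set α, IsChain (· ≤ ·) C₁ ∧ IsChain (· ≤ ·) C₂ ∧
      ∀ j : α, JoinIrreducible j → j ∈ C₁ ∪ C₂)
    (a x₁ x₂ x₃ : α) (h1 : x₁ ⋖ a) (h2 : x₂ ⋖ a) (h3 : x₃ ⋖ a)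
    (h12 : x₁ ≠ x₂) (h13 : x₁ ≠ x₃) (h23 : x₂ ≠ x₃) :
    ∃ y₁ y₂ y₃ : α, ({y₁, y₂, y₃} : Set α) = ({x₁, x₂, x₃} : Set α) ∧
      [a, y₁, y₂, y₃, y₁ ⊓ y₂, y₂ ⊓ y₃, y₁ ⊓ y₃].Pairwise (· ≠ ·) ∧
      y₁ ⊔ y₂ = a ∧ y₁ ⊔ y₃ = a ∧ y₂ ⊔ y₃ = a ∧
      (y₁ ⊓ y₂) ⊔ (y₂ ⊓ y₃) = y₂ ∧
      (y₁ ⊓ y₂) ⊔ y₃ = a ∧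
      y₁ ⊔ (y₂ ⊓ y₃) = a ∧
      y₁ ⊓ y₃ = (y₁ ⊓ y₂) ⊓ (y₂ ⊓ y₃) ∧
      (∀ u ∈ ({a, y₁, y₂, y₃, y₁ ⊓ y₂, y₂ ⊓ y₃, y₁ ⊓ y₃} : Set α),
        ∀ w ∈ ({a, y₁, y₂, y₃, y₁ ⊓ y₂, y₂ ⊓ y₃, y₁ ⊓ y₃} : Set α),
          u ⊔ w ∈ ({a, y₁, y₂, y₃, y₁ ⊓ y₂, y₂ ⊓ y₃, y₁ ⊓ y₃} : Set α) ∧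
          u ⊓ w ∈ ({a, y₁, y₂, y₃, y₁ ⊓ y₂, y₂ ⊓ y₃, y₁ ⊓ y₃} : Set α)) :=
  slim_semimodular_three_covers_S7_general hslim a x₁ x₂ x₃ h1 h2 h3 h12 h13 h23
end
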